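/- Let a, b, f be real numbers with a > 0, b > 0, f > 0 and f ≥ a + b, and let n be a nonnegative integer. Then the (n+1)-st partial sum of the Gauss hypergeometric series ₂F₁(a,b;f;1) satisfies ∑_{k=0}^{n} (a)_k (b)_k / ((f)_k · k!) = [Γ(a+n+1) Γ(b+n+1) / (Γ(n+1) Γ(a+b+n+1))] · ∑_{m=0}^{∞} (a)_m (b)_m (f+n)_m / ((f)_m (a+b+n+1)_m · m!). -/

import Mathlib

/-!
For balanced parameters `d + e = a + b + c + 1` the terms `t(a,b,c;d,e)` of `₃F₂(a,b,c;d,e;1)`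
satisfy a contiguous relation: `(e-a)(e-b)c/e · t(a,b,c+1;d,e+1) - (e-a-b)c · t(a,b,c;d,e)`
telescopes to `m ↦ t(m) m (m+d-1)`, and by Euler's limit formula
`t(m) m² → Γ(d)Γ(e)/(Γ(a)Γ(b)Γ(c))`. Summing gives a linear relation between the two Clausen
sums. For `c = e` both series collapse to Gauss's `₂F₁(a,b;a+b+1;1)`, which is thereby evaluated;
for `c = f+n, d = f, e = a+b+n+1` the relation says that the right-hand side of the theorem grows
with `n` by exactly the next term of the Gauss series.
-/

open scoped Nat

noncomputable def poch (x : ℝ) (k : ℕ) : ℝ := (ascPochhammer ℝ k).eval x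

open Filter Topology Asymptotics

lemma poch_zero (x : ℝ) : poch x 0 = 1 := by simp [poch]

lemma poch_succ (x : ℝ) (k : ℕ) : poch x (k + 1) = poch x k * (x + k) :=
  ascPochhammer_succ_eval k x

lemma poch_succ_left (x : ℝ) (k : ℕ) : poch x (k + 1) = x * poch (x + 1) k := by
  simp [poch, ascPochhammer_succ_left, Polynomial.eval_comp]

lemma poch_pos {x : ℝ} (hx : 0 < x) (k : ℕ) : 0 < poch x k := ascPochhammer_pos k x hx

lemma poch_eq_prod_range (x : ℝ) (k : ℕ) : poch x k = ∏ i ∈ Finset.range k, (x + i) := by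
  induction k with
  | zero => simp [poch]
  | succ k ih => rw [poch_succ, Finset.prod_range_succ, ih]

lemma Gamma_add_nat_eq_poch_mul {x : ℝ} (hx : 0 < x) (k : ℕ) :
    Real.Gamma (x + k) = poch x k * Real.Gamma x := by
  induction k with
  | zero => simp [poch_zero]
  | succ k ih =>
    rw [Nat.cast_succ, ← add_assoc, Real.Gamma_add_one (by positivity), ih, poch_succ]
    ring

/-- Euler's limit formula `Γ(x) = lim M^x M! / (x)_{M+1}`, with `(x)_{M+1} ~ (x)_M M`. -/
theorem tendsto_poch_mul_div_rpow_mul_factorial {x : ℝ} (hx : Real.Gamma x ≠ 0) :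
    Tendsto (fun M : ℕ => poch x M * M / ((M : ℝ) ^ x * M !)) atTop (𝓝 (Real.Gamma x)⁻¹) := by
  have hseq : Tendsto (fun M : ℕ => poch x M * (M + x) / ((M : ℝ) ^ x * M !)) atTop
      (𝓝 (Real.Gamma x)⁻¹) := by
    refine ((Real.GammaSeq_tendsto_Gamma x).inv₀ hx).congr fun M => ?_
    rw [Real.GammaSeq, inv_div, ← poch_eq_prod_range, poch_succ, add_comm x]
  have hlim := hseq.mul (tendsto_natCast_div_add_atTop x)
  rw [mul_one] at hlim
  refine hlim.congr' ?_
  filter_upwards [tendsto_natCast_atTop_atTop.eventually_gt_atTop (-x)] with M hM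
  have : (M : ℝ) + x ≠ 0 := by linarith
  field_simp

theorem summable_of_tendsto_mul_sq {g : ℕ → ℝ} {L : ℝ}
    (h : Tendsto (fun M : ℕ => g M * (M : ℝ) ^ 2) atTop (𝓝 L)) : Summable g := by
  refine summable_of_isBigO_nat (Real.summable_nat_pow_inv.2 one_lt_two) ?_
  have hg : g =ᶠ[atTop] fun M : ℕ => g M * (M : ℝ) ^ 2 * ((M : ℝ) ^ 2)⁻¹ := by
    filter_upwards [eventually_ne_atTop 0] with M hM
    field_simp
  refine hg.trans_isBigO ?_
  simpa using (h.isBigO_one ℝ).mul (isBigO_refl (fun M : ℕ => ((M : ℝ) ^ 2)⁻¹) atTop)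

theorem tendsto_mul_mul_add_of_tendsto_mul_sq {g : ℕ → ℝ} {L : ℝ}
    (h : Tendsto (fun M : ℕ => g M * (M : ℝ) ^ 2) atTop (𝓝 L)) (r : ℝ) :
    Tendsto (fun M : ℕ => g M * (M * (M + r))) atTop (𝓝 L) := by
  have hlim := h.mul ((tendsto_natCast_div_add_atTop r).inv₀ one_ne_zero)
  rw [inv_one, mul_one] at hlim
  refine hlim.congr' ?_
  filter_upwards [eventually_ne_atTop 0,
    tendsto_natCast_atTop_atTop.eventually_gt_atTop (-r)] with M hM hMr
  have : (M : ℝ) + r ≠ 0 := by linarith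
  field_simp

noncomputable def gaussTerm (a b c : ℝ) (k : ℕ) : ℝ := poch a k * poch b k / (poch c k * k !)

noncomputable def clausenTerm (a b c d e : ℝ) (m : ℕ) : ℝ :=
  poch a m * poch b m * poch c m / (poch d m * poch e m * m !)

section clausenTerm

variable {a b c d e : ℝ}

lemma clausenTerm_comm : clausenTerm a b c d e = clausenTerm a b c e d := by
  ext m
  simp only [clausenTerm, mul_comm (poch d m)]

lemma clausenTerm_cancel (hc : 0 < c) : clausenTerm a b c c e = gaussTerm a b e := by
  ext m
  have := (poch_pos hc m).ne'
  simp only [clausenTerm, gaussTerm]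
  field_simp

lemma clausenTerm_succ (m : ℕ) : clausenTerm a b c d e (m + 1) =
    clausenTerm a b c d e m * ((a + m) * (b + m) * (c + m) / ((d + m) * (e + m) * (m + 1))) := by
  simp only [clausenTerm, poch_succ, Nat.factorial_succ, Nat.cast_mul, div_mul_div_comm]
  congr 1 <;> push_cast <;> ring

lemma clausenTerm_add_one_add_one (hc : 0 < c) (he : 0 < e) (m : ℕ) :
    clausenTerm a b (c + 1) d (e + 1) m =
      clausenTerm a b c d e m * ((c + m) * e / (c * (e + m))) := by
  have hc' : poch (c + 1) m = poch c m * (c + m) / c := by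
    rw [eq_div_iff hc.ne', ← poch_succ, poch_succ_left, mul_comm]
  have he' : poch (e + 1) m = poch e m * (e + m) / e := by
    rw [eq_div_iff he.ne', ← poch_succ, poch_succ_left, mul_comm]
  have : (e : ℝ) + m ≠ 0 := by positivity
  simp only [clausenTerm, hc', he']
  field_simp

lemma sum_range_clausenTerm_contiguous (hbal : d + e = a + b + c + 1) (hc : 0 < c) (hd : 0 < d)
    (he : 0 < e) (M : ℕ) :
    ∑ m ∈ Finset.range M, ((e - a) * (e - b) * c / e * clausenTerm a b (c + 1) d (e + 1) m -
        (e - a - b) * c * clausenTerm a b c d e m) =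
      clausenTerm a b c d e M * (M * (M + d - 1)) := by
  have hstep (m : ℕ) : (e - a) * (e - b) * c / e * clausenTerm a b (c + 1) d (e + 1) m -
      (e - a - b) * c * clausenTerm a b c d e m =
        clausenTerm a b c d e (m + 1) * ((m + 1 : ℕ) * ((m + 1 : ℕ) + d - 1)) -
          clausenTerm a b c d e m * (m * (m + d - 1)) := by
    rw [clausenTerm_add_one_add_one hc he, clausenTerm_succ]
    obtain rfl : d = a + b + c + 1 - e := by linarith
    have : (e : ℝ) + m ≠ 0 := by positivity
    have : (a + b + c + 1 - e : ℝ) + m ≠ 0 := by positivity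
    push_cast
    field_simp
    ring
  rw [Finset.sum_congr rfl fun m _ => hstep m,
    Finset.sum_range_sub (fun m : ℕ => clausenTerm a b c d e m * (m * (m + d - 1)))]
  simp

theorem tendsto_clausenTerm_mul_sq (hbal : d + e = a + b + c + 1) (ha : Real.Gamma a ≠ 0)
    (hb : Real.Gamma b ≠ 0) (hc : Real.Gamma c ≠ 0) (hd : 0 < d) (he : 0 < e) :
    Tendsto (fun M : ℕ => clausenTerm a b c d e M * (M : ℝ) ^ 2) atTop
      (𝓝 (Real.Gamma d * Real.Gamma e / (Real.Gamma a * Real.Gamma b * Real.Gamma c))) := by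
  have hd' := (Real.Gamma_pos_of_pos hd).ne'
  have he' := (Real.Gamma_pos_of_pos he).ne'
  have hlim := (((tendsto_poch_mul_div_rpow_mul_factorial ha).mul
    (tendsto_poch_mul_div_rpow_mul_factorial hb)).mul
    (tendsto_poch_mul_div_rpow_mul_factorial hc)).div
    ((tendsto_poch_mul_div_rpow_mul_factorial hd').mul
    (tendsto_poch_mul_div_rpow_mul_factorial he')) (by simp [hd', he'])
  have hval : Real.Gamma d * Real.Gamma e / (Real.Gamma a * Real.Gamma b * Real.Gamma c) =
      (Real.Gamma a)⁻¹ * (Real.Gamma b)⁻¹ * (Real.Gamma c)⁻¹ /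
        ((Real.Gamma d)⁻¹ * (Real.Gamma e)⁻¹) := by
    field_simp
  rw [hval]
  refine hlim.congr' ?_
  filter_upwards [eventually_gt_atTop 0] with M hM
  have hM : (0 : ℝ) < M := by exact_mod_cast hM
  have hpow : (M : ℝ) ^ d * (M : ℝ) ^ e = (M : ℝ) ^ a * (M : ℝ) ^ b * (M : ℝ) ^ c * M := by
    simp only [← Real.rpow_add hM, hbal, Real.rpow_add_one hM.ne']
  have := (poch_pos hd M).ne'
  have := (poch_pos he M).ne'
  simp only [clausenTerm, Pi.div_apply]
  field_simp
  linear_combination poch a M * poch b M * poch c M * hpow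

theorem tsum_clausenTerm_contiguous (hbal : d + e = a + b + c + 1) (ha : Real.Gamma a ≠ 0)
    (hb : Real.Gamma b ≠ 0) (hc : 0 < c) (hd : 0 < d) (he : 0 < e) :
    (e - a) * (e - b) * c / e * ∑' m, clausenTerm a b (c + 1) d (e + 1) m -
        (e - a - b) * c * ∑' m, clausenTerm a b c d e m =
      Real.Gamma d * Real.Gamma e / (Real.Gamma a * Real.Gamma b * Real.Gamma c) := by
  have hlim := tendsto_clausenTerm_mul_sq hbal ha hb (Real.Gamma_pos_of_pos hc).ne' hd he
  have hsum := summable_of_tendsto_mul_sq hlim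
  have hsum' := summable_of_tendsto_mul_sq <| tendsto_clausenTerm_mul_sq (by linarith) ha hb
    (Real.Gamma_pos_of_pos (by linarith : 0 < c + 1)).ne' hd (by linarith : 0 < e + 1)
  rw [← tsum_mul_left, ← tsum_mul_left, ← (hsum'.mul_left _).tsum_sub (hsum.mul_left _)]
  refine (((hsum'.mul_left _).sub (hsum.mul_left _)).hasSum_iff_tendsto_nat.2 ?_).tsum_eq
  simp_rw [sum_range_clausenTerm_contiguous hbal hc hd he]
  simpa only [add_sub_assoc] using tendsto_mul_mul_add_of_tendsto_mul_sq hlim (d - 1)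

theorem tsum_gaussTerm_add_add_one (ha : 0 < a) (hb : 0 < b) :
    ∑' m, gaussTerm a b (a + b + 1) m =
      Real.Gamma (a + b + 1) / (Real.Gamma (a + 1) * Real.Gamma (b + 1)) := by
  have h := tsum_clausenTerm_contiguous (a := a) (b := b) (c := 1) (d := a + b + 1) (e := 1) (by ring)
    (Real.Gamma_pos_of_pos ha).ne' (Real.Gamma_pos_of_pos hb).ne' one_pos (by positivity) one_pos
  rw [clausenTerm_comm, clausenTerm_cancel (by norm_num), clausenTerm_comm,
    clausenTerm_cancel one_pos, Real.Gamma_one] at h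
  have := (Real.Gamma_pos_of_pos ha).ne'
  have := (Real.Gamma_pos_of_pos hb).ne'
  rw [Real.Gamma_add_one ha.ne', Real.Gamma_add_one hb.ne']
  field_simp at h ⊢
  linear_combination h

end clausenTerm

theorem gamma_mul_tsum_clausenTerm_succ {a b f : ℝ} (ha : 0 < a) (hb : 0 < b) (hf : 0 < f) (n : ℕ) :
    Real.Gamma (a + (n + 1 : ℕ) + 1) * Real.Gamma (b + (n + 1 : ℕ) + 1) /
          (Real.Gamma ((n + 1 : ℕ) + 1) * Real.Gamma (a + b + (n + 1 : ℕ) + 1)) *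
        ∑' m, clausenTerm a b (f + (n + 1 : ℕ)) f (a + b + (n + 1 : ℕ) + 1) m =
      Real.Gamma (a + n + 1) * Real.Gamma (b + n + 1) /
          (Real.Gamma (n + 1) * Real.Gamma (a + b + n + 1)) *
        ∑' m, clausenTerm a b (f + n) f (a + b + n + 1) m + gaussTerm a b f (n + 1) := by
  have hrel := tsum_clausenTerm_contiguous (a := a) (b := b) (c := f + n) (d := f) (e := a + b + n + 1)
    (by ring) (Real.Gamma_pos_of_pos ha).ne' (Real.Gamma_pos_of_pos hb).ne' (by positivity) hf
    (by positivity)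
  generalize ∑' m, clausenTerm a b (f + n) f (a + b + n + 1) m = F at hrel ⊢
  push_cast
  simp only [← add_assoc]
  generalize ∑' m, clausenTerm a b (f + n + 1) f (a + b + n + 1 + 1) m = F' at hrel ⊢
  rw [Real.Gamma_add_one (by positivity : a + n + 1 ≠ 0),
    Real.Gamma_add_one (by positivity : b + n + 1 ≠ 0),
    Real.Gamma_add_one (by positivity : (n : ℝ) + 1 ≠ 0),
    Real.Gamma_add_one (by positivity : a + b + n + 1 ≠ 0)]
  have hΓa : Real.Gamma (a + n + 1) = poch a (n + 1) * Real.Gamma a := by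
    rw [← Gamma_add_nat_eq_poch_mul ha, Nat.cast_succ, add_assoc]
  have hΓb : Real.Gamma (b + n + 1) = poch b (n + 1) * Real.Gamma b := by
    rw [← Gamma_add_nat_eq_poch_mul hb, Nat.cast_succ, add_assoc]
  rw [Gamma_add_nat_eq_poch_mul hf] at hrel
  rw [hΓa, hΓb, Real.Gamma_nat_eq_factorial, gaussTerm, poch_succ f, Nat.factorial_succ]
  have := (Real.Gamma_pos_of_pos ha).ne'
  have := (Real.Gamma_pos_of_pos hb).ne'
  have := (Real.Gamma_pos_of_pos hf).ne'
  have := (Real.Gamma_pos_of_pos (by positivity : 0 < a + b + n + 1)).ne'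
  have := (poch_pos hf n).ne'
  push_cast
  field_simp at hrel ⊢
  linear_combination poch a (n + 1) * poch b (n + 1) * hrel

theorem truncated_gauss_eq_clausen_general (a b f : ℝ) (ha : 0 < a) (hb : 0 < b) (hf : 0 < f)
    (n : ℕ) :
    ∑ k ∈ Finset.range (n + 1), poch a k * poch b k / (poch f k * (k)!) =
      Real.Gamma (a + n + 1) * Real.Gamma (b + n + 1) /
          (Real.Gamma (n + 1) * Real.Gamma (a + b + n + 1)) *
        ∑' m : ℕ, poch a m * poch b m * poch (f + n) m /
          (poch f m * poch (a + b + n + 1) m * (m)!) := by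
  change ∑ k ∈ Finset.range (n + 1), gaussTerm a b f k =
    _ * ∑' m, clausenTerm a b (f + n) f (a + b + n + 1) m
  induction n with
  | zero =>
    have hΓ := (Real.Gamma_pos_of_pos (by positivity : 0 < a + b + 1)).ne'
    simp only [Nat.cast_zero, add_zero, zero_add, Finset.sum_range_one, clausenTerm_cancel hf,
      tsum_gaussTerm_add_add_one ha hb, Real.Gamma_one]
    field_simp
    simp [gaussTerm, poch_zero]
  | succ n ih =>
    rw [Finset.sum_range_succ, ih, gamma_mul_tsum_clausenTerm_succ ha hb hf]

/-- Bailey's formula: the `(n+1)`-st partial sum of the Gauss series `₂F₁(a,b;f;1)`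
equals a gamma-factor times the Clausen series `₃F₂(a,b,f+n; f,a+b+n+1; 1)`. -/
theorem truncated_gauss_eq_clausen (a b f : ℝ) (ha : 0 < a) (hb : 0 < b) (hf : 0 < f)
    (hab : a + b ≤ f) (n : ℕ) :
    ∑ k ∈ Finset.range (n + 1), poch a k * poch b k / (poch f k * (k)!) =
      Real.Gamma (a + n + 1) * Real.Gamma (b + n + 1) /
          (Real.Gamma (n + 1) * Real.Gamma (a + b + n + 1)) *
        ∑' m : ℕ, poch a m * poch b m * poch (f + n) m /
          (poch f m * poch (a + b + n + 1) m * (m)!) :=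
  truncated_gauss_eq_clausen_general a b f ha hb hf n
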